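/- Let φ : X → Y be a homeomorphism between metric spaces, g : X → X and h : Y → Y maps with φ ∘ g = h ∘ φ. Suppose there exist points z, w₀ ∈ X with g z = z, h (φ z) = φ z, constants λ, μ ∈ (0,1), and c > 0 such that dist(gⁿ w₀, z) ≤ c·λⁿ and dist(hⁿ (φ w₀), φ z) ≥ c⁻¹·μⁿ for all n. If α > log μ / log λ, then φ is not α-Hölder. -/
import Mathlib


theorem not_holder_of_contraction_rates
    {X Y : Type*} [MetricSpace X] [MetricSpace Y]
    (φ : X ≃ₜ Y) (g : X → X) (h : Y → Y)
    (hcomm : ∀ x : X, φ (g x) = h (φ x))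
    (z w₀ : X) (hz : g z = z) (hz' : h (φ z) = φ z)
    (lam mu c : ℝ) (hlam : lam ∈ Set.Ioo (0 : ℝ) 1) (hmu : mu ∈ Set.Ioo (0 : ℝ) 1)
    (hc : 0 < c)
    (hcontr : ∀ n : ℕ, dist (g^[n] w₀) z ≤ c * lam ^ n)
    (hexp : ∀ n : ℕ, c⁻¹ * mu ^ n ≤ dist (h^[n] (φ w₀)) (φ z))
    (α : ℝ) (hα : Real.log mu / Real.log lam < α) :
    ¬ ∃ C : ℝ, ∀ x y : X, dist (φ x) (φ y) ≤ C * dist x y ^ α := by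
  rintro ⟨C, hC⟩
  obtain ⟨hlam0, hlam1⟩ := hlam
  obtain ⟨hmu0, hmu1⟩ := hmu
  have hloglam : Real.log lam < 0 := Real.log_neg hlam0 hlam1
  have hlogmu : Real.log mu < 0 := Real.log_neg hmu0 hmu1
  have hα0 : 0 < α := lt_of_le_of_lt (le_of_lt (div_pos_iff.mpr (Or.inr ⟨hlogmu, hloglam⟩))) hα
  -- λ^α < μ
  have hkey : lam ^ α < mu := by
    have h1 : α * Real.log lam < Real.log mu := by
      rw [div_lt_iff_of_neg hloglam] at hα
      linarith
    calc lam ^ α = Real.exp (α * Real.log lam) := by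
          rw [← Real.log_rpow hlam0, Real.exp_log (Real.rpow_pos_of_pos hlam0 α)]
      _ < Real.exp (Real.log mu) := Real.exp_lt_exp.mpr h1
      _ = mu := Real.exp_log hmu0
  -- φ (gⁿ w₀) = hⁿ (φ w₀)
  have hconj : ∀ n : ℕ, φ (g^[n] w₀) = h^[n] (φ w₀) := by
    intro n
    induction n with
    | zero => simp
    | succ n ih =>
      rw [Function.iterate_succ_apply', Function.iterate_succ_apply', hcomm, ih]
  -- main estimate
  have hmain : ∀ n : ℕ, c⁻¹ * mu ^ n ≤ C * c ^ α * (lam ^ α) ^ n := by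
    intro n
    have h1 : c⁻¹ * mu ^ n ≤ C * dist (g^[n] w₀) z ^ α := by
      calc c⁻¹ * mu ^ n ≤ dist (h^[n] (φ w₀)) (φ z) := hexp n
        _ = dist (φ (g^[n] w₀)) (φ z) := by rw [hconj]
        _ ≤ C * dist (g^[n] w₀) z ^ α := hC _ _
    have hCpos : 0 < C := by
      by_contra hCneg
      push_neg at hCneg
      have := h1
      have hd : (0:ℝ) ≤ dist (g^[n] w₀) z ^ α := Real.rpow_nonneg dist_nonneg α
      nlinarith [pow_pos hmu0 n, inv_pos.mpr hc]
    calc c⁻¹ * mu ^ n ≤ C * dist (g^[n] w₀) z ^ α := h1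
      _ ≤ C * (c * lam ^ n) ^ α := by
          apply mul_le_mul_of_nonneg_left _ hCpos.le
          exact Real.rpow_le_rpow dist_nonneg (hcontr n) hα0.le
      _ = C * c ^ α * (lam ^ α) ^ n := by
          rw [Real.mul_rpow hc.le (pow_nonneg hlam0.le n), ← Real.rpow_natCast lam n,
            ← Real.rpow_natCast (lam ^ α) n, ← Real.rpow_mul hlam0.le,
            ← Real.rpow_mul hlam0.le, mul_comm α (n:ℝ), mul_assoc]
  -- derive contradiction: (μ / λ^α)ⁿ unbounded
  have hr : 0 < lam ^ α := Real.rpow_pos_of_pos hlam0 α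
  have hratio : 1 < mu / lam ^ α := (one_lt_div hr).mpr hkey
  obtain ⟨n, hn⟩ := pow_unbounded_of_one_lt (C * c ^ α * c) hratio
  have := hmain n
  rw [div_pow] at hn
  have h2 : C * c ^ α * c < mu ^ n / (lam ^ α) ^ n := hn
  rw [lt_div_iff₀ (pow_pos hr n)] at h2
  have h3 : c⁻¹ * mu ^ n ≤ C * c ^ α * (lam ^ α) ^ n := this
  have h4 : c * (C * c ^ α * (lam ^ α) ^ n) < mu ^ n := by nlinarith
  have h5 : c * (c⁻¹ * mu ^ n) = mu ^ n := by field_simp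
  nlinarith
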